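/- arXiv:1910.12377 — 8 statements merged into one kernel-verified Lean document; each statement's English description precedes it below -/
import Mathlib

section
/- For a numerical semigroup S, the submonoid generated by the left elements of S equals the submonoid generated by the left primitives of S, i.e., ⟨L(S)⟩ = ⟨L(S) ∩ P(S)⟩. -/
/-- A numerical semigroup: a cofinite additive submonoid of ℕ containing 0. -/
def IsNumericalSemigroup (S : Set ℕ) : Prop :=
  0 ∈ S ∧ (∀ a ∈ S, ∀ b ∈ S, a + b ∈ S) ∧ Sᶜ.Finite

/-- The nsConductor: least `c` such that every `n ≥ c` belongs to `S`. -/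
noncomputable def nsConductor (S : Set ℕ) : ℕ :=
  sInf {c : ℕ | ∀ n : ℕ, c ≤ n → n ∈ S}

/-- The genus: number of gaps. -/
noncomputable def genus (S : Set ℕ) : ℕ := Sᶜ.ncard

/-- The Frobenius number: largest integer not in `S` (for `S ≠ ℕ`). -/
noncomputable def nsFrobenius (S : Set ℕ) : ℕ := sSup Sᶜ

/-- The multiplicity: least positive element of `S`. -/
noncomputable def mult (S : Set ℕ) : ℕ := sInf {n : ℕ | n ∈ S ∧ n ≠ 0}

/-- `p` is a minimal generator (primitive) of `S`: nonzero element of `S` that is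
not a sum of two nonzero elements of `S`. -/
def IsPrimitive (S : Set ℕ) (p : ℕ) : Prop :=
  p ∈ S ∧ p ≠ 0 ∧ ∀ a ∈ S, ∀ b ∈ S, a ≠ 0 → b ≠ 0 → a + b ≠ p

/-- The set of minimal generators of `S`. -/
def primitives (S : Set ℕ) : Set ℕ := {p | IsPrimitive S p}

/-- The embedding dimension: number of minimal generators. -/
noncomputable def edim (S : Set ℕ) : ℕ := (primitives S).ncard

/-- The left elements: elements of `S` strictly below the nsConductor. -/
def lefts (S : Set ℕ) : Set ℕ := {s ∈ S | s < nsConductor S}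

/-- The additive submonoid of ℕ generated by a set, viewed as a set. -/
def genBy (X : Set ℕ) : Set ℕ := (AddSubmonoid.closure X : Set ℕ)

/-- `T` is a child of `S`: obtained by removing one big primitive. -/
def ChildOf (S T : Set ℕ) : Prop :=
  ∃ p : ℕ, IsPrimitive S p ∧ nsConductor S ≤ p ∧ T = S \ {p}

/-- `T` is a descendant of `S` (possibly `T = S`): obtained by finitely many
removals of big primitives. -/
def DescendantOf (S T : Set ℕ) : Prop :=
  Relation.ReflTransGen (fun A B => ChildOf A B) S T

/-- The gcd of the set `X` equals `1`: the only common divisor of all elements is `1`. -/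
def SetGcdOne (X : Set ℕ) : Prop :=
  ∀ d : ℕ, (∀ x ∈ X, d ∣ x) → d = 1

theorem stmt5 (S : Set ℕ) (hS : IsNumericalSemigroup S) :
    genBy (lefts S) = genBy (lefts S ∩ primitives S) := by
  unfold genBy
  have key : ∀ s : ℕ, s ∈ lefts S →
      s ∈ AddSubmonoid.closure (lefts S ∩ primitives S) := by
    intro s
    induction s using Nat.strong_induction_on with
    | _ s ih =>
      intro hs
      rcases eq_or_ne s 0 with rfl | hs0
      · exact zero_mem _
      by_cases hp : IsPrimitive S s
      · exact AddSubmonoid.subset_closure ⟨hs, hp⟩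
      · have hsS : s ∈ S := hs.1
        have hslt : s < nsConductor S := hs.2
        simp only [IsPrimitive, not_and, not_forall] at hp
        obtain ⟨a, ha, b, hb, ha0, hb0, hab⟩ := hp hsS hs0
        push_neg at hab
        have halt : a < s := by omega
        have hblt : b < s := by omega
        have := ih a halt ⟨ha, by omega⟩
        have := ih b hblt ⟨hb, by omega⟩
        have : a + b ∈ AddSubmonoid.closure (lefts S ∩ primitives S) :=
          add_mem ‹a ∈ _› ‹b ∈ _›
        rwa [hab] at this
  apply le_antisymm
  · exact_mod_cast AddSubmonoid.closure_le.mpr key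
  · exact_mod_cast AddSubmonoid.closure_mono Set.inter_subset_left
end

section
/- Let S and S' be numerical semigroups such that S' is a descendant of S (i.e., S' can be obtained from S by iteratively removing big primitives). Then every left element of S belongs to S', i.e., L(S) ⊆ S'. -/
/-!
Shrinking a cofinite set can only raise its conductor, so along a chain of descendants the
conductor never drops below `nsConductor S`. Each step removes an element at least the current
conductor, hence never an element of `lefts S`.
-/

theorem mem_of_nsConductor_le {S : Set ℕ} (hS : Sᶜ.Finite) {n : ℕ} (hn : nsConductor S ≤ n) :
    n ∈ S := by
  have hne : {c : ℕ | ∀ n : ℕ, c ≤ n → n ∈ S}.Nonempty := by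
    obtain ⟨m, hm⟩ := hS.bddAbove
    exact ⟨m + 1, fun n hn => by_contra fun hnS => by have := hm hnS; omega⟩
  exact Nat.sInf_mem hne n hn

theorem nsConductor_le_of_subset {S T : Set ℕ} (hT : Tᶜ.Finite) (hTS : T ⊆ S) :
    nsConductor S ≤ nsConductor T :=
  Nat.sInf_le fun _ hn => hTS (mem_of_nsConductor_le hT hn)

namespace ChildOf

variable {S T : Set ℕ}

theorem subset (h : ChildOf S T) : T ⊆ S := by
  obtain ⟨p, -, -, rfl⟩ := h
  exact Set.sdiff_subset

theorem compl_finite (h : ChildOf S T) (hS : Sᶜ.Finite) : Tᶜ.Finite := by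
  obtain ⟨p, -, -, rfl⟩ := h
  rw [Set.compl_sdiff]
  exact (Set.finite_singleton p).union hS

theorem mem_of_lt_nsConductor (h : ChildOf S T) {x : ℕ} (hx : x ∈ S) (hxc : x < nsConductor S) :
    x ∈ T := by
  obtain ⟨p, -, hp, rfl⟩ := h
  exact ⟨hx, fun hxp => by rw [Set.mem_singleton_iff.mp hxp] at hxc; omega⟩

end ChildOf

namespace DescendantOf

variable {S T : Set ℕ}

theorem subset (h : DescendantOf S T) : T ⊆ S := by
  induction h with
  | refl => exact subset_rfl
  | tail _ hchild ih => exact hchild.subset.trans ih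

theorem compl_finite (h : DescendantOf S T) (hS : Sᶜ.Finite) : Tᶜ.Finite := by
  induction h with
  | refl => exact hS
  | tail _ hchild ih => exact hchild.compl_finite ih

end DescendantOf

theorem stmt7 (S S' : Set ℕ) (hS : IsNumericalSemigroup S)
    (hdesc : DescendantOf S S') :
    lefts S ⊆ S' := by
  induction hdesc with
  | refl => exact fun _ hx => hx.1
  | @tail T _ hdescT hchild ih =>
    intro x hx
    have hcond : nsConductor S ≤ nsConductor T :=
      nsConductor_le_of_subset (DescendantOf.compl_finite hdescT hS.2.2)
        (DescendantOf.subset hdescT)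
    exact hchild.mem_of_lt_nsConductor (ih hx) (hx.2.trans_le hcond)
end

section
/- Let S and S' be numerical semigroups. Then S' is a descendant of S (including S' = S) if and only if S' ∩ [0, F(S)] = S ∩ [0, F(S)], where F(S) is the Frobenius number of S. -/
lemma condSet_nonempty {S : Set ℕ} (h : Sᶜ.Finite) :
    {c : ℕ | ∀ n : ℕ, c ≤ n → n ∈ S}.Nonempty := by
  obtain ⟨m, hm⟩ := h.bddAbove
  refine ⟨m + 1, fun n hn => ?_⟩
  by_contra hns
  exact absurd (hm hns) (by omega)

lemma conductor_spec {S : Set ℕ} (h : Sᶜ.Finite) :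
    ∀ n : ℕ, nsConductor S ≤ n → n ∈ S :=
  Nat.sInf_mem (condSet_nonempty h)

lemma conductor_le {S : Set ℕ} {c : ℕ} (hc : ∀ n : ℕ, c ≤ n → n ∈ S) :
    nsConductor S ≤ c :=
  Nat.sInf_le hc

lemma child_ns {A B : Set ℕ} (hA : IsNumericalSemigroup A) (h : ChildOf A B) :
    IsNumericalSemigroup B := by
  obtain ⟨p, ⟨hpA, hp0, hprim⟩, hcp, rfl⟩ := h
  obtain ⟨h0, hadd, hfin⟩ := hA
  refine ⟨⟨h0, fun e => hp0 (e.symm)⟩, ?_, ?_⟩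
  · rintro a ⟨ha, hap⟩ b ⟨hb, hbp⟩
    refine ⟨hadd a ha b hb, fun he : a + b = p => ?_⟩
    rcases eq_or_ne a 0 with rfl | ha0
    · exact hbp (by simpa using he)
    rcases eq_or_ne b 0 with rfl | hb0
    · exact hap (by simpa using he)
    exact hprim a ha b hb ha0 hb0 he
  · have : (A \ {p})ᶜ = Aᶜ ∪ {p} := by
      ext n; simp [Set.mem_diff, and_comm]; tauto
    rw [this]
    exact hfin.union (Set.finite_singleton p)

lemma child_conductor {A B : Set ℕ} (hB : Bᶜ.Finite) (h : ChildOf A B) :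
    nsConductor A ≤ nsConductor B := by
  obtain ⟨p, hprim, hcp, rfl⟩ := h
  exact conductor_le (fun n hn => (conductor_spec hB n hn).1)

lemma desc_aux (S S' : Set ℕ) (hS : IsNumericalSemigroup S) (h : DescendantOf S S') :
    IsNumericalSemigroup S' ∧ nsConductor S ≤ nsConductor S' ∧
      S' ∩ {n : ℕ | n < nsConductor S} = S ∩ {n : ℕ | n < nsConductor S} := by
  induction h with
  | refl => exact ⟨hS, le_rfl, rfl⟩
  | @tail B C hSB hBC ih =>
    obtain ⟨hBns, hcSB, heq⟩ := ih
    have hCns : IsNumericalSemigroup C := child_ns hBns hBC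
    have hcBC : nsConductor B ≤ nsConductor C := child_conductor hCns.2.2 hBC
    refine ⟨hCns, le_trans hcSB hcBC, ?_⟩
    obtain ⟨p, hprim, hcp, rfl⟩ := hBC
    rw [← heq]
    ext n
    simp only [Set.mem_inter_iff, Set.mem_setOf_eq, Set.mem_diff, Set.mem_singleton_iff]
    constructor
    · rintro ⟨⟨hn, _⟩, hlt⟩; exact ⟨hn, hlt⟩
    · rintro ⟨hn, hlt⟩; exact ⟨⟨hn, fun e => absurd (e ▸ hlt) (by omega)⟩, hlt⟩

lemma back_aux (S' : Set ℕ) (hS' : IsNumericalSemigroup S') :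
    ∀ k : ℕ, ∀ S : Set ℕ, (S \ S').ncard = k → IsNumericalSemigroup S → S' ⊆ S →
      (∀ x ∈ S \ S', nsConductor S ≤ x) → DescendantOf S S' := by
  intro k
  induction k using Nat.strong_induction_on with
  | _ k ih =>
    intro S hk hS hsub hbig
    have hfin : (S \ S').Finite := hS'.2.2.subset (fun x hx => hx.2)
    rcases Set.eq_empty_or_nonempty (S \ S') with he | hne
    · have : S = S' := Set.Subset.antisymm (Set.diff_eq_empty.mp he) hsub
      exact this ▸ Relation.ReflTransGen.refl
    · set p := sInf (S \ S') with hp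
      have hpmem : p ∈ S \ S' := Nat.sInf_mem hne
      have hcp : nsConductor S ≤ p := hbig p hpmem
      have hp0 : p ≠ 0 := fun e => hpmem.2 (e ▸ hS'.1)
      have hprim : IsPrimitive S p := by
        refine ⟨hpmem.1, hp0, fun a ha b hb ha0 hb0 he => ?_⟩
        have haS' : a ∈ S' := by
          by_contra hx
          have := Nat.sInf_le (Set.mem_diff a |>.mpr ⟨ha, hx⟩)
          omega
        have hbS' : b ∈ S' := by
          by_contra hx
          have := Nat.sInf_le (Set.mem_diff b |>.mpr ⟨hb, hx⟩)
          omega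
        exact hpmem.2 (he ▸ hS'.2.1 a haS' b hbS')
      set T := S \ {p} with hT
      have hchild : ChildOf S T := ⟨p, hprim, hcp, rfl⟩
      have hTns : IsNumericalSemigroup T := child_ns hS hchild
      have hcT : nsConductor T ≤ p + 1 := by
        refine conductor_le (fun n hn => ⟨conductor_spec hS.2.2 n (by omega), ?_⟩)
        simp only [Set.mem_singleton_iff]; omega
      have hTsub : S' ⊆ T := fun x hx => ⟨hsub hx, fun e : x = p => hpmem.2 (e ▸ hx)⟩
      have hTdiff : T \ S' = (S \ S') \ {p} := by
        ext x; simp [hT, Set.mem_diff]; tauto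
      have hlt : (T \ S').ncard < k := by
        rw [hTdiff, ← hk]
        exact Set.ncard_diff_singleton_lt_of_mem hpmem hfin
      have hbig' : ∀ x ∈ T \ S', nsConductor T ≤ x := by
        intro x hx
        rw [hTdiff] at hx
        have h1 : p ≤ x := Nat.sInf_le hx.1
        have h2 : x ≠ p := hx.2
        omega
      exact Relation.ReflTransGen.head hchild
        (ih _ hlt T rfl hTns hTsub hbig')

theorem stmt8 (S S' : Set ℕ) (hS : IsNumericalSemigroup S) (hS' : IsNumericalSemigroup S') :
    DescendantOf S S' ↔
      S' ∩ {n : ℕ | n < nsConductor S} = S ∩ {n : ℕ | n < nsConductor S} := by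
  constructor
  · intro h
    exact (desc_aux S S' hS h).2.2
  · intro h
    have hsub : S' ⊆ S := by
      intro n hn
      rcases lt_or_ge n (nsConductor S) with hlt | hge
      · have : n ∈ S ∩ {n : ℕ | n < nsConductor S} := h ▸ ⟨hn, hlt⟩
        exact this.1
      · exact conductor_spec hS.2.2 n hge
    have hbig : ∀ x ∈ S \ S', nsConductor S ≤ x := by
      intro x hx
      by_contra hlt
      have hm : x ∈ S ∩ {n : ℕ | n < nsConductor S} := ⟨hx.1, not_le.mp hlt⟩
      rw [← h] at hm
      exact hx.2 hm.1
    exact back_aux S' hS' _ S rfl hS hsub hbig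
end

section
/- If S' is a descendant (or equals) a numerical semigroup S, then the left primitives of S are contained in the left primitives of S'; in particular the left embedding dimension satisfies le(S') ≥ le(S). -/
lemma cond_set_nonempty {T : Set ℕ} (h : Tᶜ.Finite) :
    {c : ℕ | ∀ n : ℕ, c ≤ n → n ∈ T}.Nonempty := by
  obtain ⟨c, hc⟩ := h.bddAbove
  exact ⟨c + 1, fun n hn => by
    by_contra hnT
    exact absurd (hc hnT) (by omega)⟩

lemma cond_mem {T : Set ℕ} (h : Tᶜ.Finite) :
    ∀ n : ℕ, nsConductor T ≤ n → n ∈ T :=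
  Nat.sInf_mem (cond_set_nonempty h)

lemma cond_gt {T : Set ℕ} (h : Tᶜ.Finite) {p : ℕ} (hp : p ∉ T) :
    p < nsConductor T := by
  by_contra hle
  exact hp (cond_mem h p (by omega))

lemma child_step {A B : Set ℕ} (hA : Aᶜ.Finite) (h : ChildOf A B) :
    Bᶜ.Finite ∧ lefts A ∩ primitives A ⊆ lefts B ∩ primitives B := by
  obtain ⟨p, hprim, hcond, rfl⟩ := h
  have hBfin : (A \ {p})ᶜ.Finite := by
    have : (A \ {p})ᶜ = Aᶜ ∪ {p} := by
      ext x; by_cases hxp : x = p <;> simp [hxp]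
    rw [this]; exact hA.union (Set.finite_singleton p)
  refine ⟨hBfin, fun q hq => ?_⟩
  obtain ⟨⟨hqA, hqlt⟩, hqS, hq0, hqsum⟩ := hq
  have hqp : q ≠ p := by omega
  have hpnot : p ∉ A \ {p} := by simp
  have hcB : p < nsConductor (A \ {p}) := cond_gt hBfin hpnot
  exact ⟨⟨⟨hqA, hqp⟩, by omega⟩, ⟨hqA, hqp⟩, hq0,
    fun a ha b hb ha0 hb0 => hqsum a ha.1 b hb.1 ha0 hb0⟩

theorem stmt9 (S S' : Set ℕ) (hS : IsNumericalSemigroup S) (hS' : IsNumericalSemigroup S')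
    (hdesc : DescendantOf S S') :
    lefts S ∩ primitives S ⊆ lefts S' ∩ primitives S' ∧
      (lefts S ∩ primitives S).ncard ≤ (lefts S' ∩ primitives S').ncard := by
  clear hS'
  have key : S'ᶜ.Finite ∧ lefts S ∩ primitives S ⊆ lefts S' ∩ primitives S' := by
    induction hdesc with
    | refl => exact ⟨hS.2.2, le_refl _⟩
    | tail _ hstep ih =>
      obtain ⟨hfin, hsub⟩ := ih
      obtain ⟨hfin', hsub'⟩ := child_step hfin hstep
      exact ⟨hfin', hsub.trans hsub'⟩
  refine ⟨key.2, Set.ncard_le_ncard key.2 ?_⟩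
  exact (Set.finite_Iio (nsConductor S')).subset (fun x hx => hx.1.2)
end

section
/- Let S be a non-superficial numerical semigroup (i.e., c(S) > m(S)) and let p be a prime number with p ≥ c(S). Then T = ⟨L(S) ∪ {p}⟩ is a numerical semigroup and is a descendant of S (or equal to S). -/
-- conductor spec
lemma cond_spec {S : Set ℕ} (hS : Sᶜ.Finite) : ∀ n : ℕ, nsConductor S ≤ n → n ∈ S := by
  have hne : {c : ℕ | ∀ n : ℕ, c ≤ n → n ∈ S}.Nonempty := by
    obtain ⟨N, hN⟩ := hS.bddAbove
    exact ⟨N + 1, fun n hn => by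
      by_contra h
      exact absurd (hN h) (by omega)⟩
  exact Nat.sInf_mem hne

-- representation lemma
lemma rep_lemma (m p n : ℕ) (hm : 0 < m) (hcop : Nat.Coprime p m) (hn : m * p ≤ n) :
    ∃ a b, n = a * m + b * p := by
  haveI : NeZero m := ⟨hm.ne'⟩
  set b := ((n : ZMod m) * (p : ZMod m)⁻¹).val with hbdef
  have hb : b < m := ZMod.val_lt _
  have h1 : ((b * p : ℕ) : ZMod m) = (n : ZMod m) := by
    push_cast
    rw [ZMod.natCast_zmod_val, mul_assoc, mul_comm (p : ZMod m)⁻¹ (p : ZMod m),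
      ZMod.coe_mul_inv_eq_one p hcop, mul_one]
  have hle : b * p ≤ n := le_trans (Nat.mul_le_mul_right p hb.le) hn
  have hdvd : m ∣ (n - b * p) := by
    have h2 : ((n - b * p : ℕ) : ZMod m) = 0 := by
      rw [Nat.cast_sub hle, h1, sub_self]
    exact (ZMod.natCast_eq_zero_iff _ _).mp h2
  obtain ⟨a, ha⟩ := hdvd
  exact ⟨a, b, by rw [mul_comm a m]; omega⟩

-- induction lemma
lemma descend_of (n : ℕ) : ∀ S T : Set ℕ, IsNumericalSemigroup S →
    IsNumericalSemigroup T → T ⊆ S → (∀ s ∈ S, s ∉ T → nsConductor S ≤ s) →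
    (S \ T).ncard ≤ n → DescendantOf S T := by
  induction n with
  | zero =>
    intro S T hS hT hTS hcond hcard
    have hfin : (S \ T).Finite := hT.2.2.subset (fun s hs => hs.2)
    have : S \ T = ∅ := (Set.ncard_eq_zero hfin).mp (Nat.le_zero.mp hcard)
    have : S = T := Set.Subset.antisymm (fun s hs => by
      by_contra h; exact absurd (Set.mem_diff_of_mem hs h) (this ▸ Set.notMem_empty s)) hTS
    exact this ▸ Relation.ReflTransGen.refl
  | succ n ih =>
    intro S T hS hT hTS hcond hcard
    have hfin : (S \ T).Finite := hT.2.2.subset (fun s hs => hs.2)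
    rcases Set.eq_empty_or_nonempty (S \ T) with h | h
    · have : S = T := Set.Subset.antisymm (fun s hs => by
        by_contra hh; exact absurd (Set.mem_diff_of_mem hs hh) (h ▸ Set.notMem_empty s)) hTS
      exact this ▸ Relation.ReflTransGen.refl
    · -- x = min of S \ T
      have hne : (S \ T).Nonempty := h
      set x := sInf (S \ T) with hxdef
      have hx : x ∈ S \ T := Nat.sInf_mem hne
      have hx0 : x ≠ 0 := fun h0 => hx.2 (h0 ▸ hT.1)
      -- x is primitive
      have hprim : IsPrimitive S x := by
        refine ⟨hx.1, hx0, fun a ha b hb ha0 hb0 hab => ?_⟩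
        have haT : a ∈ T := by
          by_contra h'
          have := Nat.sInf_le (Set.mem_diff_of_mem ha h')
          omega
        have hbT : b ∈ T := by
          by_contra h'
          have := Nat.sInf_le (Set.mem_diff_of_mem hb h')
          omega
        exact hx.2 (hab ▸ hT.2.1 a haT b hbT)
      set S' := S \ {x} with hS'def
      have hchild : ChildOf S S' := ⟨x, hprim, hcond x hx.1 hx.2, rfl⟩
      have hS' : IsNumericalSemigroup S' := by
        refine ⟨⟨hS.1, fun h0 => hx0 (Set.mem_singleton_iff.mp h0).symm⟩, ?_, ?_⟩
        · intro a ha b hb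
          refine ⟨hS.2.1 a ha.1 b hb.1, fun hab => ?_⟩
          have hab : a + b = x := hab
          rcases Nat.eq_zero_or_pos a with h0 | h0
          · exact hb.2 (by simp [h0] at hab; simp [hab])
          rcases Nat.eq_zero_or_pos b with h0' | h0'
          · exact ha.2 (by simp [h0'] at hab; simp [hab])
          exact hprim.2.2 a ha.1 b hb.1 h0.ne' h0'.ne' hab
        · have : S'ᶜ ⊆ Sᶜ ∪ {x} := by
            intro y hy
            by_cases hyx : y = x
            · exact Or.inr (by simp [hyx])
            · exact Or.inl (fun hyS => hy ⟨hyS, hyx⟩)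
          exact (hS.2.2.union (Set.finite_singleton x)).subset this
      have hcS' : nsConductor S' ≤ x + 1 := by
        apply Nat.sInf_le
        intro y hy
        refine ⟨cond_spec hS.2.2 y (le_trans (le_trans (hcond x hx.1 hx.2) (by omega)) le_rfl),
          fun hyx => by simp at hyx; omega⟩
      have hTS' : T ⊆ S' := by
        intro t ht
        exact ⟨hTS ht, fun htx => hx.2 ((Set.mem_singleton_iff.mp htx) ▸ ht)⟩
      have hcond' : ∀ s ∈ S', s ∉ T → nsConductor S' ≤ s := by
        intro s hs hsT
        have h1 : x ≤ s := Nat.sInf_le (Set.mem_diff_of_mem hs.1 hsT)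
        have h2 : s ≠ x := fun h' => hs.2 (by simp [h'])
        omega
      have hdiff : S' \ T = (S \ T) \ {x} := by
        ext y; simp [hS'def, Set.mem_diff]; tauto
      have hcard' : (S' \ T).ncard ≤ n := by
        rw [hdiff]
        have := Set.ncard_diff_singleton_lt_of_mem hx hfin
        omega
      exact Relation.ReflTransGen.head hchild (ih S' T hS' hT hTS' hcond' hcard')

theorem stmt11 (S : Set ℕ) (hS : IsNumericalSemigroup S) (hns : mult S < nsConductor S)
    (p : ℕ) (hp : p.Prime) (hpc : nsConductor S ≤ p) :
    IsNumericalSemigroup (genBy (lefts S ∪ {p})) ∧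
      DescendantOf S (genBy (lefts S ∪ {p})) := by
  set m := mult S with hmdef
  set c := nsConductor S with hcdef
  set T := genBy (lefts S ∪ {p}) with hTdef
  -- mult facts
  have hmne : {n : ℕ | n ∈ S ∧ n ≠ 0}.Nonempty := ⟨c + 1, cond_spec hS.2.2 _ (by omega), by omega⟩
  have hmmem : m ∈ S ∧ m ≠ 0 := Nat.sInf_mem hmne
  have hm0 : 0 < m := Nat.pos_of_ne_zero hmmem.2
  -- m ∈ lefts
  have hmL : m ∈ lefts S := ⟨hmmem.1, hns⟩
  have hmT : m ∈ AddSubmonoid.closure (lefts S ∪ {p}) :=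
    AddSubmonoid.subset_closure (Or.inl hmL)
  have hpT : p ∈ AddSubmonoid.closure (lefts S ∪ {p}) :=
    AddSubmonoid.subset_closure (Or.inr rfl)
  have hcop : Nat.Coprime p m := (Nat.Prime.coprime_iff_not_dvd hp).mpr
    (fun hd => absurd (Nat.le_of_dvd hm0 hd) (by omega))
  -- big elements are in T
  have hbig : ∀ n : ℕ, m * p ≤ n → n ∈ AddSubmonoid.closure (lefts S ∪ {p}) := by
    intro n hn
    obtain ⟨a, b, hab⟩ := rep_lemma m p n hm0 hcop hn
    rw [hab]
    refine AddSubmonoid.add_mem _ ?_ ?_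
    · have := nsmul_mem hmT a
      simpa [nsmul_eq_mul] using this
    · have := nsmul_mem hpT b
      simpa [nsmul_eq_mul] using this
  have hTns : IsNumericalSemigroup T := by
    refine ⟨AddSubmonoid.zero_mem _, fun a ha b hb => AddSubmonoid.add_mem _ ha hb, ?_⟩
    have : Tᶜ ⊆ Set.Iio (m * p) := by
      intro y hy
      by_contra h
      exact hy (hbig y (by simpa using h))
    exact (Set.finite_Iio _).subset this
  refine ⟨hTns, ?_⟩
  -- T ⊆ S
  have hpS : p ∈ S := cond_spec hS.2.2 p hpc
  have hTS : T ⊆ S := by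
    have : AddSubmonoid.closure (lefts S ∪ {p}) ≤
        { carrier := S, zero_mem' := hS.1, add_mem' := fun {a b} ha hb => hS.2.1 a ha b hb } := by
      apply AddSubmonoid.closure_le.mpr
      rintro y (hy | hy)
      · exact hy.1
      · exact (Set.mem_singleton_iff.mp hy) ▸ hpS
    exact fun t ht => this ht
  have hcond : ∀ s ∈ S, s ∉ T → nsConductor S ≤ s := by
    intro s hs hsT
    by_contra h
    exact hsT (AddSubmonoid.subset_closure (Or.inl ⟨hs, by omega⟩))
  exact descend_of (S \ T).ncard S T hS hTns hTS hcond le_rfl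
end

section
/- Let S be a numerical semigroup whose set L(S) of left elements is nonempty. Then S has infinitely many descendants if and only if the greatest common divisor of its left elements is different from 1. -/
namespace Aux12

lemma cond_mem {S : Set ℕ} (h : Sᶜ.Finite) : ∀ n, nsConductor S ≤ n → n ∈ S := by
  have hne : {c : ℕ | ∀ n : ℕ, c ≤ n → n ∈ S}.Nonempty := by
    obtain ⟨m, hm⟩ := h.bddAbove
    exact ⟨m + 1, fun n hn => by_contra fun hns => absurd (hm hns) (by omega)⟩
  exact Nat.sInf_mem hne

lemma cond_mono {A B : Set ℕ} (hB : Bᶜ.Finite) (h : B ⊆ A) :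
    nsConductor A ≤ nsConductor B :=
  Nat.sInf_le (fun n hn => h (cond_mem hB n hn))

lemma cond_pos {S : Set ℕ} (hfin : Sᶜ.Finite) (hne : S ≠ Set.univ) : 1 ≤ nsConductor S := by
  rcases Nat.eq_zero_or_pos (nsConductor S) with h | h
  · exact absurd (Set.eq_univ_of_forall fun n => cond_mem hfin n (h ▸ Nat.zero_le n)) hne
  · exact h

/-- Forward characterization: a descendant is a numerical semigroup contained in `S`
whose removed elements are all `≥ nsConductor S`. -/
lemma desc_good {S T : Set ℕ} (hS : IsNumericalSemigroup S) (h : DescendantOf S T) :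
    IsNumericalSemigroup T ∧ T ⊆ S ∧ ∀ x ∈ S, x ∉ T → nsConductor S ≤ x := by
  induction h with
  | refl => exact ⟨hS, le_refl _, fun x hx hx' => absurd hx hx'⟩
  | tail h1 h2 ih =>
    rename_i B T
    obtain ⟨⟨hB0, hBadd, hBfin⟩, hBS, hrem⟩ := ih
    obtain ⟨p, hp, hpc, rfl⟩ := h2
    refine ⟨⟨⟨hB0, fun h => hp.2.1 h.symm⟩, ?_, ?_⟩, fun x hx => hBS hx.1, ?_⟩
    · rintro a ⟨haB, hap⟩ b ⟨hbB, hbp⟩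
      refine ⟨hBadd a haB b hbB, ?_⟩
      rcases eq_or_ne a 0 with rfl | ha0
      · simpa using hbp
      rcases eq_or_ne b 0 with rfl | hb0
      · simpa using hap
      · exact hp.2.2 a haB b hbB ha0 hb0
    · have : (B \ {p})ᶜ = Bᶜ ∪ {p} := by
        ext y; by_cases hy : y = p <;> simp [hy]
      rw [this]
      exact hBfin.union (Set.finite_singleton p)
    · intro x hxS hxT
      by_cases hxB : x ∈ B
      · have hxp : x = p := by
          by_contra h
          exact hxT ⟨hxB, h⟩
        subst hxp
        exact le_trans (cond_mono hBfin hBS) hpc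
      · exact hrem x hxS hxB

/-- Reverse characterization. -/
lemma desc_of (T : Set ℕ) (h0 : 0 ∈ T) (hadd : ∀ a ∈ T, ∀ b ∈ T, a + b ∈ T) :
    ∀ n (S : Set ℕ), Sᶜ.Finite → (S \ T).Finite → (S \ T).ncard = n → T ⊆ S →
      (∀ x ∈ S, x ∉ T → nsConductor S ≤ x) → DescendantOf S T := by
  intro n
  induction n using Nat.strong_induction_on with
  | _ n ih =>
    intro S hSfin hfin hcard hsub hbig
    rcases eq_or_ne (S \ T) ∅ with he | he
    · have hST : S = T := Set.Subset.antisymm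
        (fun x hx => by_contra fun hx' => (Set.eq_empty_iff_forall_notMem.mp he x ⟨hx, hx'⟩)) hsub
      exact hST ▸ Relation.ReflTransGen.refl
    · have hne : (S \ T).Nonempty := Set.nonempty_iff_ne_empty.mpr he
      set x := sInf (S \ T) with hxdef
      have hxmem : x ∈ S \ T := Nat.sInf_mem hne
      have hxmin : ∀ y ∈ S \ T, x ≤ y := fun y hy => Nat.sInf_le hy
      have hx0 : x ≠ 0 := fun h => hxmem.2 (h ▸ h0)
      have hxprim : IsPrimitive S x := by
        refine ⟨hxmem.1, hx0, ?_⟩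
        intro a ha b hb ha0 hb0 hab
        have haT : a ∈ T := by
          by_contra h
          have := hxmin a ⟨ha, h⟩; omega
        have hbT : b ∈ T := by
          by_contra h
          have := hxmin b ⟨hb, h⟩; omega
        exact hxmem.2 (hab ▸ hadd a haT b hbT)
      have hxc : nsConductor S ≤ x := hbig x hxmem.1 hxmem.2
      have hchild : ChildOf S (S \ {x}) := ⟨x, hxprim, hxc, rfl⟩
      have hS1fin : (S \ {x})ᶜ.Finite := by
        have : (S \ {x})ᶜ = Sᶜ ∪ {x} := by
          ext y; by_cases hy : y = x <;> simp [hy]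
        rw [this]; exact hSfin.union (Set.finite_singleton x)
      have hS1c : nsConductor (S \ {x}) ≤ x + 1 := by
        apply Nat.sInf_le
        intro m hm
        exact ⟨cond_mem hSfin m (by omega), by simp; omega⟩
      have hdiff : (S \ {x}) \ T = (S \ T) \ {x} := by
        ext y
        simp only [Set.mem_diff, Set.mem_singleton_iff]
        tauto
      have hcard' : ((S \ {x}) \ T).ncard = n - 1 := by
        rw [hdiff, Set.ncard_diff_singleton_of_mem hxmem, hcard]
      have hn1 : 1 ≤ n := by
        rw [← hcard]
        exact (Set.ncard_pos hfin).mpr hne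
      have hdesc : DescendantOf (S \ {x}) T := by
        apply ih (n - 1) (by omega) _ hS1fin (by rw [hdiff]; exact hfin.diff) hcard'
          (fun y hy => ⟨hsub hy, fun h => hxmem.2 (h ▸ hy)⟩)
        intro y hy hyT
        have hyx : y ≠ x := by
          intro h; exact hy.2 (by simp [h])
        have := hxmin y ⟨hy.1, hyT⟩
        omega
      exact Relation.ReflTransGen.head hchild hdesc

/-- If the closure contains consecutive elements `b, b+1` and a nonzero `x ∈ X`,
then it contains everything from `x*b + x` on. -/
lemma closure_cofinite {X : Set ℕ} {b x : ℕ} (hb : b ∈ AddSubmonoid.closure X)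
    (hb1 : b + 1 ∈ AddSubmonoid.closure X) (hx : x ∈ X) (hx0 : x ≠ 0) :
    ∀ n, x * b + x ≤ n → n ∈ AddSubmonoid.closure X := by
  intro n hn
  have hxm : x ∈ AddSubmonoid.closure X := AddSubmonoid.subset_closure hx
  have hxpos : 0 < x := Nat.pos_of_ne_zero hx0
  have h1 : n % x < x := Nat.mod_lt _ hxpos
  have h2 : b + 1 ≤ n / x := by
    rw [Nat.le_div_iff_mul_le hxpos]
    have : (b + 1) * x = x * b + x := by ring
    omega
  have h3 : n % x + x * (n / x) = n := Nat.mod_add_div n x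
  have key : n = (n % x) * (b + 1) + (x - n % x) * b + (n / x - b) * x := by
    zify [le_of_lt h1, le_trans (Nat.le_succ b) h2]
    nlinarith [h3]
  rw [key]
  refine add_mem (add_mem ?_ ?_) ?_
  · simpa [smul_eq_mul] using nsmul_mem hb1 (n % x)
  · simpa [smul_eq_mul] using nsmul_mem hb (x - n % x)
  · simpa [smul_eq_mul] using nsmul_mem hxm (n / x - b)

/-- If the gcd of `X` is 1, the closure contains two consecutive elements. -/
lemma exists_consec {X : Set ℕ} (h : SetGcdOne X) :
    ∃ b, b ∈ AddSubmonoid.closure X ∧ b + 1 ∈ AddSubmonoid.closure X := by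
  set M := AddSubmonoid.closure X with hM
  let D : AddSubgroup ℤ :=
    { carrier := {z | ∃ a ∈ M, ∃ b ∈ M, z = (a : ℤ) - (b : ℤ)}
      zero_mem' := ⟨0, zero_mem M, 0, zero_mem M, by ring⟩
      add_mem' := by
        rintro z w ⟨a, ha, b, hb, rfl⟩ ⟨c, hc, d, hd, rfl⟩
        exact ⟨a + c, add_mem ha hc, b + d, add_mem hb hd, by push_cast; ring⟩
      neg_mem' := by
        rintro z ⟨a, ha, b, hb, rfl⟩
        exact ⟨b, hb, a, ha, by ring⟩ }
  obtain ⟨g, hg⟩ := Int.subgroup_cyclic (AddSubgroup.closure ((↑) '' X : Set ℤ))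
  have hdvd : ∀ x ∈ X, g ∣ (x : ℤ) := by
    intro x hx
    have hmem : (x : ℤ) ∈ AddSubgroup.closure ((↑) '' X : Set ℤ) :=
      AddSubgroup.subset_closure ⟨x, hx, rfl⟩
    rw [hg, AddSubgroup.mem_closure_singleton] at hmem
    obtain ⟨k, hk⟩ := hmem
    exact ⟨k, by rw [← hk, smul_eq_mul]; ring⟩
  have hg1 : g.natAbs = 1 := by
    apply h
    intro x hx
    have := hdvd x hx
    rwa [← Int.natAbs_dvd_natAbs, Int.natAbs_natCast] at this
  have h1G : (1 : ℤ) ∈ AddSubgroup.closure ((↑) '' X : Set ℤ) := by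
    rw [hg, AddSubgroup.mem_closure_singleton]
    rcases Int.natAbs_eq g with he | he
    · exact ⟨1, by rw [he, hg1]; simp⟩
    · exact ⟨-1, by rw [he, hg1]; simp⟩
  have hGD : AddSubgroup.closure ((↑) '' X : Set ℤ) ≤ D := by
    apply (AddSubgroup.closure_le _).mpr
    rintro z ⟨x, hx, rfl⟩
    exact ⟨x, AddSubmonoid.subset_closure hx, 0, zero_mem M, by simp⟩
  obtain ⟨a, ha, b, hb, hab⟩ := hGD h1G
  have : a = b + 1 := by omega
  exact ⟨b, hb, this ▸ ha⟩

end Aux12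

theorem stmt12 (S : Set ℕ) (hS : IsNumericalSemigroup S) (hne : S ≠ Set.univ) :
    {S' : Set ℕ | DescendantOf S S'}.Infinite ↔ ¬ SetGcdOne (lefts S) := by
  obtain ⟨hS0, hSadd, hSfin⟩ := hS
  have hc1 : 1 ≤ nsConductor S := Aux12.cond_pos hSfin hne
  have hcmem : ∀ n, nsConductor S ≤ n → n ∈ S := Aux12.cond_mem hSfin
  constructor
  · -- infinite → gcd ≠ 1 (contrapositive)
    intro hinf
    intro hgcd
    -- there is a nonzero left element
    have hpos : ∃ x ∈ lefts S, x ≠ 0 := by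
      by_contra hcon
      push_neg at hcon
      have := hgcd 2 (fun y hy => by rw [hcon y hy]; exact dvd_zero 2)
      omega
    obtain ⟨x, hxL, hx0⟩ := hpos
    obtain ⟨b, hb, hb1⟩ := Aux12.exists_consec hgcd
    set F := x * b + x with hF
    have hFmem : ∀ n, F ≤ n → n ∈ AddSubmonoid.closure (lefts S) :=
      Aux12.closure_cofinite hb hb1 hxL hx0
    -- every descendant contains [F, ∞)
    have hdescF : ∀ T, DescendantOf S T → ∀ n, F ≤ n → n ∈ T := by
      intro T hT n hn
      obtain ⟨⟨hT0, hTadd, hTfin⟩, hTS, hrem⟩ := Aux12.desc_good ⟨hS0, hSadd, hSfin⟩ hT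
      have hLsub : lefts S ⊆ T := by
        intro y hy
        by_contra hyT
        have := hrem y hy.1 hyT
        exact absurd hy.2 (by omega)
      let T' : AddSubmonoid ℕ :=
        { carrier := T
          zero_mem' := hT0
          add_mem' := fun {a} {c} ha hc => hTadd a ha c hc }
      have : AddSubmonoid.closure (lefts S) ≤ T' := AddSubmonoid.closure_le.mpr hLsub
      exact this (hFmem n hn)
    -- the map T ↦ T ∩ [0, F) is injective on descendants, with finite range
    apply hinf
    apply Set.Finite.of_finite_image (f := fun T => T ∩ Set.Iio F)
    · apply Set.Finite.subset ((Set.finite_Iio F).finite_subsets)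
      rintro y ⟨T, _, rfl⟩
      exact Set.inter_subset_right
    · intro T hT T' hT' heq
      have heq' : T ∩ Set.Iio F = T' ∩ Set.Iio F := heq
      ext n
      rcases lt_or_ge n F with hnF | hnF
      · constructor <;> intro hn
        · exact (heq' ▸ (Set.mem_inter hn hnF) : n ∈ T' ∩ Set.Iio F).1
        · exact (heq'.symm ▸ (Set.mem_inter hn hnF) : n ∈ T ∩ Set.Iio F).1
      · exact ⟨fun _ => hdescF T' hT' n hnF, fun _ => hdescF T hT n hnF⟩
  · -- gcd ≠ 1 → infinite
    intro hgcd
    simp only [SetGcdOne, not_forall] at hgcd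
    obtain ⟨d0, hd0div, hd0⟩ := hgcd
    -- replace d0 by d ≥ 2 still dividing all lefts
    obtain ⟨d, hd2, hddiv⟩ : ∃ d, 2 ≤ d ∧ ∀ y ∈ lefts S, d ∣ y := by
      rcases Nat.eq_zero_or_pos d0 with h0 | h0
      · exact ⟨2, le_refl 2, fun y hy => by
          have := hd0div y hy; rw [h0] at this; rw [Nat.zero_dvd.mp this]; exact dvd_zero 2⟩
      · exact ⟨d0, by omega, hd0div⟩
    set c := nsConductor S with hcdef
    -- family of descendants
    set f : ℕ → Set ℕ := fun N => {y ∈ S | (d ∣ y ∧ y < N) ∨ N ≤ y} with hf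
    set N : ℕ → ℕ := fun k => (c + 1 + k) * d + 1 with hN
    have hNc : ∀ k, c ≤ N k := by
      intro k
      have h1 : c + 1 ≤ (c + 1 + k) * d := by nlinarith
      simp only [hN]
      omega
    have hNd : ∀ k, ¬ d ∣ N k := by
      intro k hdvd
      simp only [hN] at hdvd
      have hd1 : d ∣ 1 := (Nat.dvd_add_right ⟨c + 1 + k, by ring⟩).mp hdvd
      exact absurd (Nat.le_of_dvd one_pos hd1) (by omega)
    have hfinS : ∀ k, (S \ f (N k)).Finite := by
      intro k
      apply (Set.finite_Iio (N k)).subset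
      rintro y ⟨hyS, hyf⟩
      simp only [Set.mem_Iio]
      by_contra hc'
      exact hyf ⟨hyS, Or.inr (by omega)⟩
    have hdesc : ∀ k, DescendantOf S (f (N k)) := by
      intro k
      refine Aux12.desc_of (f (N k)) ?_ ?_ ((S \ f (N k)).ncard) S hSfin (hfinS k) rfl ?_ ?_
      · exact ⟨hS0, Or.inl ⟨dvd_zero d, by have := hNc k; omega⟩⟩
      · rintro a ⟨haS, ha⟩ b2 ⟨hbS, hb2⟩
        refine ⟨hSadd a haS b2 hbS, ?_⟩
        rcases ha with ⟨had, haN⟩ | haN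
        · rcases hb2 with ⟨hbd, hbN⟩ | hbN
          · rcases lt_or_ge (a + b2) (N k) with h | h
            · exact Or.inl ⟨dvd_add had hbd, h⟩
            · exact Or.inr h
          · exact Or.inr (by omega)
        · exact Or.inr (by omega)
      · exact fun y hy => hy.1
      · intro y hyS hyT
        by_contra hyc
        push_neg at hyc
        exact hyT ⟨hyS, Or.inl ⟨hddiv y ⟨hyS, hyc⟩, by have := hNc k; omega⟩⟩
    -- injectivity
    have key : ∀ k l, k < l → f (N k) ≠ f (N l) := by
      intro k l hlt heq
      have hNlt : N k < N l := by
        have h1 : (c + 1 + k) * d < (c + 1 + l) * d :=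
          (Nat.mul_lt_mul_right (show 0 < d by omega)).mpr (by omega)
        simp only [hN]
        omega
      have hmem : N k ∈ f (N k) := ⟨hcmem _ (hNc k), Or.inr (le_refl _)⟩
      rw [heq] at hmem
      rcases hmem.2 with ⟨hdvd, _⟩ | hge
      · exact hNd k hdvd
      · omega
    have hinj : Function.Injective (fun k => f (N k)) := by
      intro k l hkl
      by_contra hne'
      rcases Nat.lt_or_ge k l with h | h
      · exact key k l h hkl
      · exact key l k (by omega) hkl.symm
    exact Set.infinite_of_injective_forall_mem hinj (fun k => hdesc k)
end

section
/- Let S be a numerical semigroup with gcd of left elements equal to 1, and let T = ⟨L(S)⟩. Then for every descendant S' of S, g(S') ≤ g(T) and c(S') ≤ c(T); that is, T attains the maximum genus and maximum conductor among all descendants of S. -/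
/-!
Removing a minimal generator `p ≥ c(S)` from a numerical semigroup yields a numerical semigroup
`S \ {p}` contained in `S`, so conductors can only grow along descendants. Hence every left element
of `S` stays below the conductor of every descendant `S'`, and is never removed: `L(S) ⊆ S'`.
As `S'` is a monoid, `T = ⟨L(S)⟩ ⊆ S'`. Since `gcd L(S) = 1`, `T` is cofinite, and both the genus
and the conductor are antitone under inclusion of cofinite sets.
-/

lemma setGcd_eq_one_of_setGcdOne {X : Set ℕ} (h : SetGcdOne X) : Nat.setGcd X = 1 :=
  h _ fun _ ↦ Nat.setGcd_dvd_of_mem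

lemma compl_genBy_finite {X : Set ℕ} (h : SetGcdOne X) : (genBy X)ᶜ.Finite := by
  obtain ⟨n, hn⟩ := Nat.exists_mem_closure_of_ge X
  refine (Set.finite_Iio n).subset fun m hm ↦ ?_
  by_contra hge
  exact hm (hn m (not_lt.mp hge) (setGcd_eq_one_of_setGcdOne h ▸ one_dvd m))

lemma nsConductor_mem {X : Set ℕ} (h : Xᶜ.Finite) {n : ℕ} (hn : nsConductor X ≤ n) : n ∈ X := by
  obtain ⟨b, hb⟩ := h.bddAbove
  have hne : {c : ℕ | ∀ n : ℕ, c ≤ n → n ∈ X}.Nonempty :=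
    ⟨b + 1, fun n hn ↦ by_contra fun hx ↦ absurd (hb hx) (by omega)⟩
  exact Nat.sInf_mem hne n hn

lemma nsConductor_anti {X Y : Set ℕ} (hXY : X ⊆ Y) (hX : Xᶜ.Finite) :
    nsConductor Y ≤ nsConductor X :=
  Nat.sInf_le fun _ hn ↦ hXY (nsConductor_mem hX hn)

lemma genus_anti {X Y : Set ℕ} (hXY : X ⊆ Y) (hX : Xᶜ.Finite) : genus Y ≤ genus X :=
  Set.ncard_le_ncard (Set.compl_subset_compl.mpr hXY) hX

lemma IsNumericalSemigroup.genBy_subset {S : Set ℕ} (hS : IsNumericalSemigroup S) {X : Set ℕ}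
    (hX : X ⊆ S) : genBy X ⊆ S :=
  AddSubmonoid.closure_le (S := ⟨⟨S, fun {a b} ha hb ↦ hS.2.1 a ha b hb⟩, hS.1⟩) |>.mpr hX

lemma IsNumericalSemigroup.diff_primitive {S : Set ℕ} (hS : IsNumericalSemigroup S) {p : ℕ}
    (hp : IsPrimitive S p) : IsNumericalSemigroup (S \ {p}) := by
  obtain ⟨h0, hadd, hfin⟩ := hS
  obtain ⟨-, hp0, hprim⟩ := hp
  refine ⟨⟨h0, Ne.symm hp0⟩, ?_, ?_⟩
  · rintro a ⟨ha, hap⟩ b ⟨hb, hbp⟩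
    refine ⟨hadd a ha b hb, fun hab ↦ ?_⟩
    rcases Nat.eq_zero_or_pos a with rfl | ha0
    · exact hbp (by simpa using hab)
    rcases Nat.eq_zero_or_pos b with rfl | hb0
    · exact hap (by simpa using hab)
    exact hprim a ha b hb ha0.ne' hb0.ne' hab
  · rw [Set.compl_sdiff]
    exact (Set.finite_singleton p).union hfin

lemma ChildOf.isNumericalSemigroup {S T : Set ℕ} (h : ChildOf S T) (hS : IsNumericalSemigroup S) :
    IsNumericalSemigroup T := by
  obtain ⟨p, hp, -, rfl⟩ := h
  exact hS.diff_primitive hp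

lemma ChildOf.subset_s13 {S T : Set ℕ} (h : ChildOf S T) : T ⊆ S := by
  obtain ⟨p, -, -, rfl⟩ := h
  exact Set.sdiff_subset

lemma ChildOf.lefts_subset {S T : Set ℕ} (h : ChildOf S T) : lefts S ⊆ T := by
  obtain ⟨p, -, hp, rfl⟩ := h
  exact fun x hx ↦ ⟨hx.1, by simpa using (hx.2.trans_le hp).ne⟩

lemma DescendantOf.isNumericalSemigroup {S S' : Set ℕ} (h : DescendantOf S S')
    (hS : IsNumericalSemigroup S) : IsNumericalSemigroup S' := by
  induction h with
  | refl => exact hS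
  | tail _ hchild ih => exact hchild.isNumericalSemigroup ih

lemma DescendantOf.lefts_subset_lefts {S S' : Set ℕ} (h : DescendantOf S S')
    (hS : IsNumericalSemigroup S) : lefts S ⊆ lefts S' := by
  induction h with
  | refl => exact subset_rfl
  | @tail A B hdesc hchild ih =>
    have hB : IsNumericalSemigroup B :=
      hchild.isNumericalSemigroup (DescendantOf.isNumericalSemigroup hdesc hS)
    have hAB : nsConductor A ≤ nsConductor B := nsConductor_anti hchild.subset_s13 hB.2.2
    exact fun x hx ↦ ⟨hchild.lefts_subset (ih hx), (ih hx).2.trans_le hAB⟩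

theorem stmt13 (S : Set ℕ) (hS : IsNumericalSemigroup S) (hgcd : SetGcdOne (lefts S)) :
    ∀ S' : Set ℕ, DescendantOf S S' →
      genus S' ≤ genus (genBy (lefts S)) ∧ nsConductor S' ≤ nsConductor (genBy (lefts S)) := by
  intro S' hdesc
  have hT : genBy (lefts S) ⊆ S' :=
    (hdesc.isNumericalSemigroup hS).genBy_subset fun x hx ↦ (hdesc.lefts_subset_lefts hS hx).1
  exact ⟨genus_anti hT (compl_genBy_finite hgcd), nsConductor_anti hT (compl_genBy_finite hgcd)⟩
end

section
/- Fix m ≥ 2 and i ≥ 0, and let S_i = ⟨{m} ∪ I_i⟩ where I_i = {x ∈ [m+i+1, 2m+i] : m ∤ x}. Then the embedding dimension of S_i equals m; that is, every element of {m} ∪ I_i is a minimal generator of S_i. -/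
/-! Every element of `S_i` is a multiple of `m` or at least `m + i + 1`, and every nonzero element
is at least `m`. So a sum of two nonzero elements that lies in `[m + i + 1, 2m + i]` is a sum of two
multiples of `m`, which rules out the generators in `I_i`; `m` itself is too small to split. Since
the primitives of a generated monoid lie among the generators, the primitives are exactly
`{m} ∪ I_i`, and `I_i` has `m - 1` elements because `m` consecutive integers contain exactly one
multiple of `m`. -/

section GenBy

variable {X : Set ℕ} {s : ℕ}

lemma mem_genBy_of_mem {x : ℕ} (hx : x ∈ X) : x ∈ genBy X :=
  AddSubmonoid.subset_closure hx

lemma eq_zero_or_mem_or_exists_add_of_mem_genBy (hs : s ∈ genBy X) :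
    s = 0 ∨ s ∈ X ∨ ∃ a ∈ genBy X, ∃ b ∈ genBy X, a ≠ 0 ∧ b ≠ 0 ∧ a + b = s := by
  induction hs using AddSubmonoid.closure_induction with
  | mem x hx => exact .inr (.inl hx)
  | zero => exact .inl rfl
  | add a b ha hb iha ihb =>
    by_cases ha0 : a = 0
    · simpa [ha0] using ihb
    by_cases hb0 : b = 0
    · simpa [hb0] using iha
    exact .inr (.inr ⟨a, ha, b, hb, ha0, hb0, rfl⟩)

lemma primitives_genBy_subset : primitives (genBy X) ⊆ X := by
  rintro p ⟨hp, hp0, hsplit⟩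
  rcases eq_zero_or_mem_or_exists_add_of_mem_genBy hp with h | h | ⟨a, ha, b, hb, ha0, hb0, hab⟩
  · exact absurd h hp0
  · exact h
  · exact absurd hab (hsplit a ha b hb ha0 hb0)

lemma primitives_genBy_eq (h : ∀ x ∈ X, IsPrimitive (genBy X) x) : primitives (genBy X) = X :=
  primitives_genBy_subset.antisymm h

variable {m k : ℕ}

lemma eq_zero_or_le_of_mem_genBy (hX : ∀ x ∈ X, m ≤ x) (hs : s ∈ genBy X) : s = 0 ∨ m ≤ s := by
  induction hs using AddSubmonoid.closure_induction with
  | mem x hx => exact .inr (hX x hx)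
  | zero => exact .inl rfl
  | add a b _ _ iha ihb => omega

lemma dvd_or_le_of_mem_genBy (hX : ∀ x ∈ X, m ∣ x ∨ k ≤ x) (hs : s ∈ genBy X) : m ∣ s ∨ k ≤ s := by
  induction hs using AddSubmonoid.closure_induction with
  | mem x hx => exact hX x hx
  | zero => exact .inl (dvd_zero m)
  | add a b _ _ iha ihb =>
    rcases iha with ha | ha
    · rcases ihb with hb | hb
      · exact .inl (dvd_add ha hb)
      · exact .inr (le_add_left hb)
    · exact .inr (le_add_right ha)

lemma isPrimitive_genBy_of_lt_two_mul (hX : ∀ x ∈ X, m ≤ x) {x : ℕ} (hx : x ∈ X) (hx0 : x ≠ 0)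
    (hxm : x < 2 * m) : IsPrimitive (genBy X) x := by
  refine ⟨mem_genBy_of_mem hx, hx0, fun a ha b hb ha0 hb0 hab => ?_⟩
  have := eq_zero_or_le_of_mem_genBy hX ha
  have := eq_zero_or_le_of_mem_genBy hX hb
  omega

lemma isPrimitive_genBy_of_not_dvd (hX : ∀ x ∈ X, m ≤ x) (hXk : ∀ x ∈ X, m ∣ x ∨ k ≤ x)
    {x : ℕ} (hx : x ∈ X) (hxm : ¬ m ∣ x) (hxk : x < m + k) : IsPrimitive (genBy X) x := by
  refine ⟨mem_genBy_of_mem hx, fun h => hxm (h ▸ dvd_zero m), fun a ha b hb ha0 hb0 hab => ?_⟩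
  have := eq_zero_or_le_of_mem_genBy hX ha
  have := eq_zero_or_le_of_mem_genBy hX hb
  rcases dvd_or_le_of_mem_genBy hXk ha with hma | hka
  · rcases dvd_or_le_of_mem_genBy hXk hb with hmb | hkb
    · exact hxm (hab ▸ dvd_add hma hmb)
    · omega
  · omega

end GenBy

section Counting

open Finset

lemma Nat.card_Ioc_filter_dvd {a b : ℕ} (hab : a ≤ b) (m : ℕ) :
    #{x ∈ Ioc a b | m ∣ x} = b / m - a / m := by
  have hsplit : #{x ∈ Ioc 0 a | m ∣ x} + #{x ∈ Ioc a b | m ∣ x} = #{x ∈ Ioc 0 b | m ∣ x} := by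
    rw [← card_union_of_disjoint (disjoint_filter_filter (Ioc_disjoint_Ioc_of_le le_rfl)),
      ← filter_union, Ioc_union_Ioc_eq_Ioc (Nat.zero_le a) hab]
  rw [Nat.Ioc_filter_dvd_card_eq_div, Nat.Ioc_filter_dvd_card_eq_div] at hsplit
  omega

lemma Nat.ncard_setOf_not_dvd_Ioc {m : ℕ} (hm : 0 < m) (a : ℕ) :
    {x | a < x ∧ x ≤ a + m ∧ ¬ m ∣ x}.ncard = m - 1 := by
  have hdvd : #{x ∈ Ioc a (a + m) | m ∣ x} = 1 := by
    rw [Nat.card_Ioc_filter_dvd (Nat.le_add_right a m), Nat.add_div_right a hm]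
    omega
  have hsum := card_filter_add_card_filter_not (s := Ioc a (a + m)) (m ∣ ·)
  rw [hdvd, Nat.card_Ioc] at hsum
  have hset : {x | a < x ∧ x ≤ a + m ∧ ¬ m ∣ x} = ↑{x ∈ Ioc a (a + m) | ¬ m ∣ x} := by
    ext x; simp [and_assoc]
  rw [hset, Set.ncard_coe_finset]
  omega

end Counting

theorem stmt19 (m i : ℕ) (hm : 2 ≤ m) (I : Set ℕ)
    (hI : I = {x : ℕ | m + i + 1 ≤ x ∧ x ≤ 2 * m + i ∧ ¬ m ∣ x})
    (S : Set ℕ) (hS : S = genBy ({m} ∪ I)) :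
    edim S = m ∧ ∀ x ∈ ({m} : Set ℕ) ∪ I, IsPrimitive S x := by
  subst hS
  have hmemI : ∀ x, x ∈ I ↔ m + i + 1 ≤ x ∧ x ≤ 2 * m + i ∧ ¬ m ∣ x := fun x => by rw [hI]; rfl
  have hmI : m ∉ I := by simp [hmemI]
  have hge : ∀ x ∈ ({m} : Set ℕ) ∪ I, m ≤ x := by
    rintro x (rfl | hx)
    · exact le_rfl
    · have := (hmemI x).1 hx; omega
  have hdvd_or_ge : ∀ x ∈ ({m} : Set ℕ) ∪ I, m ∣ x ∨ m + i + 1 ≤ x := by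
    rintro x (rfl | hx)
    · exact .inl dvd_rfl
    · exact .inr ((hmemI x).1 hx).1
  have hprim : ∀ x ∈ ({m} : Set ℕ) ∪ I, IsPrimitive (genBy ({m} ∪ I)) x := by
    rintro x (rfl | hx)
    · exact isPrimitive_genBy_of_lt_two_mul hge (.inl rfl) (by omega) (by omega)
    · obtain ⟨-, hx_le, hx_ndvd⟩ := (hmemI x).1 hx
      exact isPrimitive_genBy_of_not_dvd hge hdvd_or_ge (.inr hx) hx_ndvd (by omega)
  have hcardI : I.ncard = m - 1 := by
    have hI' : I = {x | m + i < x ∧ x ≤ m + i + m ∧ ¬ m ∣ x} := by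
      ext x; rw [hmemI]; simp only [Set.mem_ofPred_eq]; omega
    rw [hI', Nat.ncard_setOf_not_dvd_Ioc (by omega)]
  refine ⟨?_, hprim⟩
  rw [edim, primitives_genBy_eq hprim, Set.ncard_union_eq (Set.disjoint_singleton_left.2 hmI)
    (Set.finite_singleton m) (Set.finite_of_ncard_pos (by omega)), Set.ncard_singleton, hcardI]
  omega
end
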